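/- arXiv:2503.02079 — 4 statements merged into one kernel-verified Lean document; each statement's English description precedes it below -/
import Mathlib

section
/- If B(\alpha, \epsilon) is a function analytic (regular) in \epsilon such that the formal power series \exp\left(\int_0^{\alpha} \frac{du}{u}\frac{B(u,\epsilon)}{u\epsilon - B(u,\epsilon)}\right), expanded order by order in \alpha, has coefficients consisting only of pole terms in \epsilon (i.e. no nonnegative powers of \epsilon beyond the leading 1), then B(\alpha,\epsilon) is independent of \epsilon. -/
/-!
Let `b_n, z_n` be the `α^n`-coefficients of `B, Z`, and measure Laurent series in `ε` by the
largest exponent they contain. Comparing `α^n`-coefficients in the differential equation,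
`b_n = b_n z_0` is the `α^n`-coefficient of `(αε - B) · α ∂_α Z` minus the mixed terms
`b_i z_j` with `i < n`, `0 < j`. By induction `b_i` has degree `≤ 0` for `i < n`, while `z_j`
and `j z_j` have degree `≤ -1` and `αε - B` has degree `≤ 1` below order `n`; so every term on
the right has degree `≤ 0`, and hence so has `b_n`. Being regular, `b_n` is then constant in `ε`.
-/

open PowerSeries Set

/-- A Laurent series in `ε` is *regular* if it has no pole terms. -/
def EpsRegular (c : LaurentSeries ℂ) : Prop := ∀ n : ℤ, n < 0 → c.coeff n = 0

/-- A Laurent series in `ε` consists of *pole terms only*. -/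
def EpsPoleOnly (c : LaurentSeries ℂ) : Prop := ∀ n : ℤ, 0 ≤ n → c.coeff n = 0

/-- The element `ε` of the Laurent series ring. -/
noncomputable def epsLS : LaurentSeries ℂ := HahnSeries.single 1 1

namespace HahnSeries

variable {Γ R : Type*} [PartialOrder Γ]

theorem support_sum_subset_Iic [AddCommMonoid R] {ι : Type*} (s : Finset ι)
    (f : ι → HahnSeries Γ R) {a : Γ} (hf : ∀ i ∈ s, (f i).support ⊆ Iic a) :
    (∑ i ∈ s, f i).support ⊆ Iic a :=
  Finset.sum_induction f (fun x => x.support ⊆ Iic a)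
    (fun _ _ hx hy => (support_add_subset _ _).trans (union_subset hx hy))
    (by simp) hf

variable [AddCommMonoid Γ] [IsOrderedCancelAddMonoid Γ]

theorem support_mul_subset_Iic [NonUnitalNonAssocSemiring R] {x y : HahnSeries Γ R} {a b : Γ}
    (hx : x.support ⊆ Iic a) (hy : y.support ⊆ Iic b) : (x * y).support ⊆ Iic (a + b) :=
  support_mul_subset.trans ((add_subset_add hx hy).trans (Iic_add_Iic_subset a b))

theorem support_mul_natCast_subset [NonAssocSemiring R] (x : HahnSeries Γ R) (n : ℕ) :
    (x * n).support ⊆ x.support := by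
  intro i hi
  rw [mem_support, ← single_zero_natCast, coeff_mul_single_zero] at hi
  exact left_ne_zero_of_mul hi

end HahnSeries

namespace PowerSeries

variable {Γ R : Type*} [AddCommMonoid Γ] [PartialOrder Γ] [IsOrderedCancelAddMonoid Γ]

theorem support_coeff_mul_sub_subset_Iic [Ring R] {F G : PowerSeries (HahnSeries Γ R)} {n : ℕ}
    {a b : Γ} (hF : ∀ i < n, (coeff i F).support ⊆ Iic a)
    (hG : ∀ j, 0 < j → (coeff j G).support ⊆ Iic b) :
    (coeff n (F * G) - coeff n F * constantCoeff G).support ⊆ Iic (a + b) := by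
  have hmem := (Finset.HasAntidiagonal.mem_antidiagonal (a := (n, 0))).mpr (add_zero n)
  rw [coeff_mul, ← Finset.add_sum_erase _ _ hmem, ← coeff_zero_eq_constantCoeff_apply,
    add_sub_cancel_left]
  refine HahnSeries.support_sum_subset_Iic _ _ fun p hp => ?_
  obtain ⟨hne, hp⟩ := Finset.mem_erase.mp hp
  rw [Finset.HasAntidiagonal.mem_antidiagonal] at hp
  have hp2 : 0 < p.2 := Nat.pos_of_ne_zero fun h => hne (Prod.ext (by omega) h)
  exact HahnSeries.support_mul_subset_Iic (hF _ (by omega)) (hG _ hp2)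

theorem support_coeff_X_mul_derivative_subset [CommRing R] {f : PowerSeries (HahnSeries Γ R)}
    {b : Γ} (hf : ∀ j, 0 < j → (coeff j f).support ⊆ Iic b) (j : ℕ) :
    (coeff j (X * d⁄dX _ f)).support ⊆ Iic b := by
  cases j with
  | zero => simp
  | succ k =>
    rw [coeff_succ_X_mul, coeff_derivative, ← Nat.cast_succ]
    exact (HahnSeries.support_mul_natCast_subset _ _).trans (hf _ k.succ_pos)

theorem support_coeff_X_mul_C_subset [Semiring R] (c : HahnSeries Γ R) (i : ℕ) :
    (coeff i (X * C c)).support ⊆ c.support := by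
  cases i with
  | zero => simp
  | succ k =>
    rw [coeff_succ_X_mul, coeff_C]
    split_ifs <;> simp

end PowerSeries

theorem support_epsLS : epsLS.support ⊆ Iic 1 :=
  HahnSeries.support_single_subset.trans (singleton_subset_iff.mpr self_mem_Iic)

theorem EpsPoleOnly.support_subset {c : LaurentSeries ℂ} (hc : EpsPoleOnly c) :
    c.support ⊆ Iic (-1) := fun i hi => by
  by_contra h
  exact hi (hc i (by simp at h; omega))

theorem support_coeff_subset_Iic_zero_of_ode {B Z : PowerSeries (LaurentSeries ℂ)}
    (hZ0 : constantCoeff Z = 1)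
    (hZode : (X * C epsLS - B) * (X * d⁄dX _ Z) = B * Z)
    (hpole : ∀ n : ℕ, 1 ≤ n → EpsPoleOnly (coeff n Z)) (n : ℕ) :
    (coeff n B).support ⊆ Iic 0 := by
  induction n using Nat.strong_induction_on with
  | _ n ih =>
    have hZ : ∀ j, 0 < j → (coeff j Z).support ⊆ Iic (-1) := fun j hj =>
      (hpole j hj).support_subset
    have hlhs : (coeff n ((X * C epsLS - B) * (X * d⁄dX _ Z))).support ⊆ Iic 0 := by
      have hF : ∀ i < n, (coeff i (X * C epsLS - B)).support ⊆ Iic 1 := fun i hi => by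
        rw [map_sub]
        refine (HahnSeries.support_sub_subset _ _).trans (union_subset ?_ ?_)
        · exact (support_coeff_X_mul_C_subset _ _).trans support_epsLS
        · exact (ih i hi).trans (Iic_subset_Iic.mpr zero_le_one)
      have h := support_coeff_mul_sub_subset_Iic hF fun j _ =>
        support_coeff_X_mul_derivative_subset hZ j
      rwa [map_mul constantCoeff, constantCoeff_X, zero_mul, mul_zero, sub_zero,
        add_neg_cancel] at h
    have hrhs : (coeff n (B * Z) - coeff n B).support ⊆ Iic (0 + -1) := by
      simpa [hZ0] using support_coeff_mul_sub_subset_Iic (n := n) ih hZ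
    rw [← hZode] at hrhs
    rw [← sub_sub_cancel (coeff n ((X * C epsLS - B) * (X * d⁄dX _ Z))) (coeff n B)]
    exact (HahnSeries.support_sub_subset _ _).trans
      (union_subset hlhs (hrhs.trans (Iic_subset_Iic.mpr (by norm_num))))

/-- `Z = exp (∫_0^α du/u · B(u,ε)/(uε - B(u,ε)))` is encoded as the solution of
`(αε - B) · α ∂_α Z = B · Z` with `Z(0) = 1`. -/
theorem MS_beta_eps_independent_general
    (B Z : PowerSeries (LaurentSeries ℂ))
    (hBreg : ∀ n : ℕ, EpsRegular (PowerSeries.coeff n B))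
    (hZ0 : PowerSeries.constantCoeff Z = 1)
    (hZode : (PowerSeries.X * PowerSeries.C epsLS - B) *
        (PowerSeries.X * PowerSeries.derivativeFun Z) = B * Z)
    (hpole : ∀ n : ℕ, 1 ≤ n → EpsPoleOnly (PowerSeries.coeff n Z)) :
    ∀ n : ℕ, ∀ m : ℤ, m ≠ 0 → (PowerSeries.coeff n B).coeff m = 0 := by
  intro n m hm
  rcases hm.lt_or_gt with hneg | hpos
  · exact hBreg n m hneg
  · by_contra h
    exact hpos.not_ge (support_coeff_subset_Iic_zero_of_ode hZ0 hZode hpole n h)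

/-- Let `B(α,ε)` be a formal power series in `α` (no constant term)
whose coefficients are Laurent series in `ε` regular at `ε = 0`.  Let
`Z = exp (∫_0^α du/u · B(u,ε)/(uε - B(u,ε)))`, characterized as the unique series
with constant term `1` satisfying the equivalent differential equation
`(αε - B) · α ∂_α Z = B · Z`.  If every coefficient of `α^n`, `n ≥ 1`, of `Z`
consists of pole terms in `ε` only, then `B` is independent of `ε`. -/
theorem MS_beta_eps_independent
    (B Z : PowerSeries (LaurentSeries ℂ))
    (hB0 : PowerSeries.coeff 0 B = 0)
    (hBreg : ∀ n : ℕ, EpsRegular (PowerSeries.coeff n B))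
    (hZ0 : PowerSeries.constantCoeff Z = 1)
    (hZode : (PowerSeries.X * PowerSeries.C epsLS - B) *
        (PowerSeries.X * PowerSeries.derivativeFun Z) = B * Z)
    (hpole : ∀ n : ℕ, 1 ≤ n → EpsPoleOnly (PowerSeries.coeff n Z)) :
    ∀ n : ℕ, ∀ m : ℤ, m ≠ 0 → (PowerSeries.coeff n B).coeff m = 0 :=
  MS_beta_eps_independent_general B Z hBreg hZ0 hZode hpole
end

section
/- Let \gamma(\alpha,\epsilon) = \gamma(\alpha) + \epsilon g(\alpha) + O(\epsilon^2) be a formal solution of the equation obtained by expanding (T_0(\rho) + \epsilon T_0(\rho)T_1(\rho))|_{\rho \mapsto \gamma(\alpha,\epsilon) - \epsilon\alpha\partial_\alpha} = \alpha to first order in \epsilon, where the operator substitution means L-to-derivative replacement acting on the constant function (acting on \gamma itself via the convention described). Then at order \epsilon^0 one has T_0(\gamma(\alpha)) = \alpha, and at order \epsilon^1: g(\alpha) = \alpha\frac{\frac{1}{2}\partial_\rho^2 T_0|_{\rho=\gamma(\alpha)} \cdot \partial_\alpha\gamma(\alpha) - T_1(\gamma(\alpha))}{\partial_\rho T_0|_{\rho=\gamma(\alpha)}}.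 -/
/-!
Expanding `(γ + ε(g - α∂))^j · 1` to first order, the derivative can act on each factor
`γ^m` standing to the right of `γ^k` (`k + m = j - 1`), producing `m γ^(j-2) γ'`; summing
over `m < j` gives `C(j,2) γ^(j-2) γ'`, so the `ε¹`-coefficient is
`j g γ^(j-1) - α γ' C(j,2) γ^(j-2)`. Against the coefficients `t_j` of `T₀` these two terms
assemble into `g T₀'(γ) - α γ' T₀''(γ)/2` (the second being the order-2 Hasse derivative),
so the first-order equation is linear in `g` and can be solved when `T₀'(γ) ≠ 0`.
-/

open Polynomial Finset

namespace Polynomial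

variable {R : Type*} [CommSemiring R]

theorem eval_hasseDeriv_eq_sum_range (k : ℕ) (p : R[X]) (x : R) :
    (hasseDeriv k p).eval x =
      ∑ j ∈ range (p.natDegree + 1), p.coeff j * ((j.choose k : R) * x ^ (j - k)) := by
  rw [hasseDeriv_apply, eval_sum, sum_over_range _ (fun n => by simp)]
  refine sum_congr rfl fun j _ => ?_
  rw [eval_monomial]
  ring

theorem eval_derivative_derivative_eq_two_mul_eval_hasseDeriv (p : R[X]) (x : R) :
    p.derivative.derivative.eval x = 2 * (hasseDeriv 2 p).eval x := by
  have h := congrFun (factorial_smul_hasseDeriv (R := R) (k := 2)) p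
  simp only [Nat.factorial_two, LinearMap.smul_apply, Function.iterate_succ, Function.iterate_zero,
    Function.comp_apply, Function.id_def] at h
  rw [← h, eval_smul, nsmul_eq_mul, Nat.cast_ofNat]

end Polynomial

section

variable {R : Type*} [CommSemiring R]

theorem pow_mul_natCast_mul_pow_pred (x : R) (k m : ℕ) :
    x ^ k * ((m : R) * x ^ (m - 1)) = m * x ^ (k + m - 1) := by
  cases m with
  | zero => simp
  | succ m => rw [Nat.add_sub_cancel, ← Nat.add_assoc, Nat.add_sub_cancel]; ring

theorem sum_range_pow_mul_pow_sub_one_sub (x : R) (j : ℕ) :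
    ∑ k ∈ range j, x ^ k * x ^ (j - 1 - k) = j * x ^ (j - 1) := by
  have hterm : ∀ k ∈ range j, x ^ k * x ^ (j - 1 - k) = x ^ (j - 1) := fun k hk => by
    rw [← pow_add]
    congr 1
    have := mem_range.mp hk
    omega
  rw [sum_congr rfl hterm, sum_const, card_range, nsmul_eq_mul]

theorem sum_range_pow_mul_natCast_mul_pow (x : R) (j : ℕ) :
    ∑ k ∈ range j, x ^ k * (((j - 1 - k : ℕ) : R) * x ^ (j - 1 - k - 1)) =
      (j.choose 2 : R) * x ^ (j - 2) := by
  have hterm : ∀ k ∈ range j, x ^ k * (((j - 1 - k : ℕ) : R) * x ^ (j - 1 - k - 1)) =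
      ((j - 1 - k : ℕ) : R) * x ^ (j - 2) := fun k hk => by
    rw [pow_mul_natCast_mul_pow_pred]
    congr 2
    have := mem_range.mp hk
    omega
  rw [sum_congr rfl hterm, ← sum_mul, ← Nat.cast_sum, sum_range_reflect (fun i => i) j,
    sum_range_id, ← Nat.choose_two_right]

end

section

variable {𝕜 𝔸 : Type*} [NontriviallyNormedField 𝕜] [NormedCommRing 𝔸] [NormedAlgebra 𝕜 𝔸]
  {f : 𝕜 → 𝔸} {f' : 𝔸} {x : 𝕜}

theorem sum_range_pow_mul_deriv_pow (hf : HasDerivAt f f' x) (j : ℕ) :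
    ∑ k ∈ range j, f x ^ k * deriv (fun y => f y ^ (j - 1 - k)) x =
      (j.choose 2 : 𝔸) * f x ^ (j - 2) * f' := by
  have hderiv : ∀ m : ℕ, deriv (fun y => f y ^ m) x = m * f x ^ (m - 1) * f' :=
    fun m => (hf.fun_pow m).deriv
  simp only [hderiv, ← mul_assoc, ← sum_mul]
  rw [← sum_range_pow_mul_natCast_mul_pow]
  simp only [mul_assoc]

theorem sum_range_pow_mul_sub_mul_deriv_pow (hf : HasDerivAt f f' x) (c a : 𝔸) (j : ℕ) :
    ∑ k ∈ range j, f x ^ k * (c * f x ^ (j - 1 - k) - a * deriv (fun y => f y ^ (j - 1 - k)) x) =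
      c * ((j : 𝔸) * f x ^ (j - 1)) - a * f' * ((j.choose 2 : 𝔸) * f x ^ (j - 2)) := by
  have hsplit : ∀ k ∈ range j, f x ^ k * (c * f x ^ (j - 1 - k) -
      a * deriv (fun y => f y ^ (j - 1 - k)) x) =
        c * (f x ^ k * f x ^ (j - 1 - k)) - a * (f x ^ k * deriv (fun y => f y ^ (j - 1 - k)) x) :=
    fun k _ => by ring
  rw [sum_congr rfl hsplit, sum_sub_distrib, ← mul_sum, ← mul_sum,
    sum_range_pow_mul_pow_sub_one_sub, sum_range_pow_mul_deriv_pow hf]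
  ring

theorem sum_coeff_mul_sum_range_pow_mul_sub_mul_deriv_pow (p : 𝔸[X]) (hf : HasDerivAt f f' x)
    (c a : 𝔸) :
    ∑ j ∈ range (p.natDegree + 1), p.coeff j * ∑ k ∈ range j,
        f x ^ k * (c * f x ^ (j - 1 - k) - a * deriv (fun y => f y ^ (j - 1 - k)) x) =
      c * p.derivative.eval (f x) - a * f' * (hasseDeriv 2 p).eval (f x) := by
  rw [← hasseDeriv_one', eval_hasseDeriv_eq_sum_range, eval_hasseDeriv_eq_sum_range, mul_sum,
    mul_sum, ← sum_sub_distrib]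
  refine sum_congr rfl fun j _ => ?_
  rw [sum_range_pow_mul_sub_mul_deriv_pow hf, Nat.choose_one_right]
  ring

end

theorem g_Mellin_general (T0 : Polynomial ℝ) (T1 γ γ' g : ℝ → ℝ)
    (hγ : ∀ α : ℝ, HasDerivAt γ (γ' α) α)
    (horder1 : ∀ α : ℝ,
      (∑ j ∈ range (T0.natDegree + 1), T0.coeff j *
        ∑ k ∈ range j,
          γ α ^ k * (g α * γ α ^ (j - 1 - k) -
            α * deriv (fun x => γ x ^ (j - 1 - k)) α))
        + α * T1 (γ α) = 0)
    (α : ℝ) (hden : T0.derivative.eval (γ α) ≠ 0) :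
    g α = α * ((1/2) * T0.derivative.derivative.eval (γ α) * γ' α - T1 (γ α))
            / T0.derivative.eval (γ α) := by
  have h := horder1 α
  rw [sum_coeff_mul_sum_range_pow_mul_sub_mul_deriv_pow T0 (hγ α)] at h
  rw [eval_derivative_derivative_eq_two_mul_eval_hasseDeriv, eq_div_iff hden]
  linear_combination h

/-- Theorem 3 of the paper: expanding the pseudo-differential
equation `(T₀(ρ) + ε T₀(ρ)T₁(ρ))|_{ρ ↦ γ(α,ε) - ε α ∂_α} = α` to first order in
`ε`, with `γ(α,ε) = γ(α) + ε g(α) + O(ε²)`.  The order-`ε⁰` part is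
`T₀(γ(α)) = α`; the order-`ε¹` part is
`∑_j t_j [ε¹]((γ + ε(g - α∂_α))^j · 1) + α T₁(γ(α)) = 0`, where
`[ε¹]((γ + ε(g - α∂))^j · 1) = ∑_{k=0}^{j-1} γ^k (g γ^{j-1-k} - α ∂_α γ^{j-1-k})`
(operator ordering kept).  Then
`g(α) = α (½ T₀''(γ) γ'(α) - T₁(γ)) / T₀'(γ)`. -/
theorem g_Mellin (T0 : Polynomial ℝ) (T1 γ γ' g : ℝ → ℝ)
    (hT00 : T0.coeff 0 = 0) (hT01 : T0.coeff 1 ≠ 0)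
    (hγ : ∀ α : ℝ, HasDerivAt γ (γ' α) α)
    (horder0 : ∀ α : ℝ, T0.eval (γ α) = α)
    (horder1 : ∀ α : ℝ,
      (∑ j ∈ range (T0.natDegree + 1), T0.coeff j *
        ∑ k ∈ range j,
          γ α ^ k * (g α * γ α ^ (j - 1 - k) -
            α * deriv (fun x => γ x ^ (j - 1 - k)) α))
        + α * T1 (γ α) = 0)
    (α : ℝ) (hden : T0.derivative.eval (γ α) ≠ 0) :
    g α = α * ((1/2) * T0.derivative.derivative.eval (γ α) * γ' α - T1 (γ α))
            / T0.derivative.eval (γ α) :=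
  g_Mellin_general T0 T1 γ γ' g hγ horder1 α hden
end

section
/- Define g(\alpha) = \frac{-\alpha}{1-4\alpha} - \alpha\frac{2\gamma_E + \psi\left(\frac{3-\sqrt{1-4\alpha}}{2}\right) + \psi\left(\frac{3+\sqrt{1-4\alpha}}{2}\right)}{\sqrt{1-4\alpha}}, where \psi is the digamma function and \gamma_E the Euler–Mascheroni constant. Then for \alpha near 0, \exp\left(-\int_0^\alpha \frac{g(u)}{u}du\right) = \frac{e^{\gamma_E(1-\sqrt{1-4\alpha})}\,\Gamma\left(\frac{3-\sqrt{1-4\alpha}}{2}\right)}{(1-4\alpha)^{1/4}\,\Gamma\left(\frac{3+\sqrt{1-4\alpha}}{2}\right)}. -/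
/-!
The exponent is an antiderivative: with `s = √(1 - 4u)`, the logarithm of the right-hand side
is `γ_E (1 - s) + log Γ((3 - s)/2) - log Γ((3 + s)/2) - log (1 - 4u) / 4`, whose `u`-derivative
is `1/(1 - 4u) + (2γ_E + ψ((3 - s)/2) + ψ((3 + s)/2))/s = -g(u)/u` because `ds/du = -2/s`.
It vanishes at `u = 0` since `Γ 1 = Γ 2 = 1`, so the fundamental theorem of calculus gives the
identity as long as `(3 - s)/2 > 0`, i.e. `α > -2`.
-/

/-- The real digamma function `ψ = (ln Γ)' = Γ'/Γ`. -/
noncomputable def digamma (x : ℝ) : ℝ := deriv Real.Gamma x / Real.Gamma x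

open Real Set intervalIntegral

lemma ne_neg_natCast_of_pos {x : ℝ} (hx : 0 < x) (m : ℕ) : x ≠ -m := by
  linarith [m.cast_nonneg (α := ℝ)]

lemma Real.deriv_Gamma_eq_re_complex {x : ℝ} (hx : ∀ m : ℕ, x ≠ -m) :
    deriv Gamma x = (deriv Complex.Gamma x).re := by
  have hx' : ∀ m : ℕ, (x : ℂ) ≠ -m := by exact_mod_cast hx
  have := (Complex.differentiableAt_Gamma _ hx').hasDerivAt.real_of_complex
  simp only [Complex.Gamma_ofReal, Complex.ofReal_re] at this
  exact this.deriv

lemma Real.continuousAt_deriv_Gamma {x : ℝ} (hx : 0 < x) : ContinuousAt (deriv Gamma) x := by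
  have hU : IsOpen {s : ℂ | 0 < s.re} := isOpen_lt continuous_const Complex.continuous_re
  have hA : AnalyticOnNhd ℂ Complex.Gamma {s : ℂ | 0 < s.re} :=
    DifferentiableOn.analyticOnNhd (fun s hs => (Complex.differentiableAt_Gamma s fun m hm => by
      simp only [hm, mem_ofPred_eq, Complex.neg_re, Complex.natCast_re] at hs
      linarith [m.cast_nonneg (α := ℝ)]).differentiableWithinAt) hU
  have hre : ContinuousAt (fun y : ℝ => (deriv Complex.Gamma y).re) x :=
    Complex.continuous_re.continuousAt.comp
      ((hA.deriv x (by simpa using hx)).continuousAt.comp Complex.continuous_ofReal.continuousAt)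
  refine hre.congr ?_
  filter_upwards [Ioi_mem_nhds hx] with y hy
  exact (deriv_Gamma_eq_re_complex (ne_neg_natCast_of_pos hy)).symm

lemma continuousAt_digamma {x : ℝ} (hx : 0 < x) : ContinuousAt digamma x :=
  (continuousAt_deriv_Gamma hx).div (differentiableOn_Gamma_Ioi.differentiableAt
    (Ioi_mem_nhds hx)).continuousAt (Gamma_pos_of_pos hx).ne'

lemma hasDerivAt_log_Gamma {x : ℝ} (hx : ∀ m : ℕ, x ≠ -m) :
    HasDerivAt (fun y => log (Gamma y)) (digamma x) x :=
  (differentiableAt_Gamma hx).hasDerivAt.log (Gamma_ne_zero hx)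

lemma sqrt_one_sub_four_mul_mem_Ioo {u : ℝ} (hu : u ∈ Ioo (-2 : ℝ) (1/4)) :
    √(1 - 4*u) ∈ Ioo (0 : ℝ) 3 := by
  refine ⟨sqrt_pos.mpr (by linarith [hu.2]), ?_⟩
  rw [sqrt_lt' (by norm_num)]
  linarith [hu.1]

noncomputable def logGammaRatio (s : ℝ) : ℝ :=
  eulerMascheroniConstant * (1 - s) + log (Gamma ((3 - s) / 2)) - log (Gamma ((3 + s) / 2))

lemma hasDerivAt_logGammaRatio {s : ℝ} (hs : s ∈ Ioo (-3 : ℝ) 3) :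
    HasDerivAt logGammaRatio
      (-(2 * eulerMascheroniConstant + digamma ((3 - s) / 2) + digamma ((3 + s) / 2)) / 2) s := by
  have hminus := (hasDerivAt_log_Gamma
    (ne_neg_natCast_of_pos (by linarith [hs.2] : 0 < (3 - s) / 2))).comp s
    (((hasDerivAt_id s).const_sub 3).div_const 2)
  have hplus := (hasDerivAt_log_Gamma
    (ne_neg_natCast_of_pos (by linarith [hs.1] : 0 < (3 + s) / 2))).comp s
    (((hasDerivAt_id s).const_add 3).div_const 2)
  exact (((((hasDerivAt_id s).const_sub 1).const_mul eulerMascheroniConstant).add hminus).sub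
    hplus).congr_deriv (by ring)

noncomputable def rainbowLog (u : ℝ) : ℝ :=
  logGammaRatio √(1 - 4*u) - log (1 - 4*u) / 4

noncomputable def rainbowLogDeriv (u : ℝ) : ℝ :=
  1 / (1 - 4*u) + (2 * eulerMascheroniConstant + digamma ((3 - √(1 - 4*u)) / 2)
    + digamma ((3 + √(1 - 4*u)) / 2)) / √(1 - 4*u)

lemma hasDerivAt_rainbowLog {u : ℝ} (hu : u ∈ Ioo (-2 : ℝ) (1/4)) :
    HasDerivAt rainbowLog (rainbowLogDeriv u) u := by
  have hlin : HasDerivAt (fun u : ℝ => 1 - 4*u) (-4) u := by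
    simpa using ((hasDerivAt_id u).const_mul 4).const_sub 1
  have hpos : 0 < 1 - 4*u := by linarith [hu.2]
  obtain ⟨hs0, hs3⟩ := sqrt_one_sub_four_mul_mem_Ioo hu
  have hsqrt := (hasDerivAt_logGammaRatio ⟨by linarith, hs3⟩).comp u
    ((hasDerivAt_sqrt hpos.ne').comp u hlin)
  refine (hsqrt.sub (((hasDerivAt_log hpos.ne').comp u hlin).div_const 4)).congr_deriv ?_
  unfold rainbowLogDeriv
  field_simp
  ring

lemma continuousOn_rainbowLogDeriv : ContinuousOn rainbowLogDeriv (Ioo (-2) (1/4)) := by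
  intro u hu
  obtain ⟨hs0, hs3⟩ := sqrt_one_sub_four_mul_mem_Ioo hu
  have hψ {f : ℝ → ℝ} (hf : ContinuousAt f u) (hf0 : 0 < f u) :
      ContinuousAt (fun u => digamma (f u)) u :=
    (continuousAt_digamma hf0).comp hf
  have hminus := hψ (f := fun u => (3 - √(1 - 4*u)) / 2) (by fun_prop) (by linarith)
  have hplus := hψ (f := fun u => (3 + √(1 - 4*u)) / 2) (by fun_prop) (by linarith)
  refine ContinuousAt.continuousWithinAt ?_
  exact (continuousAt_const.div (by fun_prop) (by linarith [hu.2])).add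
    (((continuousAt_const.add hminus).add hplus).div (by fun_prop) hs0.ne')

lemma rainbowLog_zero : rainbowLog 0 = 0 := by
  norm_num [rainbowLog, logGammaRatio]

lemma exp_rainbowLog {u : ℝ} (hu : u ∈ Ioo (-2 : ℝ) (1/4)) :
    exp (rainbowLog u) = exp (eulerMascheroniConstant * (1 - √(1 - 4*u)))
      * Gamma ((3 - √(1 - 4*u)) / 2)
        / ((1 - 4*u) ^ ((1:ℝ)/4) * Gamma ((3 + √(1 - 4*u)) / 2)) := by
  obtain ⟨hs0, hs3⟩ := sqrt_one_sub_four_mul_mem_Ioo hu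
  have hpos : 0 < 1 - 4*u := by linarith [hu.2]
  rw [rainbowLog, logGammaRatio, exp_sub, exp_sub, exp_add,
    exp_log (Gamma_pos_of_pos (by linarith)), exp_log (Gamma_pos_of_pos (by linarith)),
    rpow_def_of_pos hpos, div_div]
  ring_nf

/-- with
`g(α) = -α/(1-4α) - α (2γ_E + ψ((3-√(1-4α))/2) + ψ((3+√(1-4α))/2))/√(1-4α)`,
one has, for `α` near `0`,
`exp(-∫_0^α g(u)/u du)
  = e^{γ_E(1-√(1-4α))} Γ((3-√(1-4α))/2) / ((1-4α)^{1/4} Γ((3+√(1-4α))/2))`. -/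
theorem yukawa_gamma0_integral (g : ℝ → ℝ)
    (hg : ∀ u : ℝ, g u = -u / (1 - 4*u) -
      u * (2 * Real.eulerMascheroniConstant
            + digamma ((3 - Real.sqrt (1 - 4*u)) / 2)
            + digamma ((3 + Real.sqrt (1 - 4*u)) / 2)) / Real.sqrt (1 - 4*u)) :
    ∀ α : ℝ, -2 < α → α < 1/4 →
      Real.exp (-∫ u in (0:ℝ)..α, g u / u) =
        Real.exp (Real.eulerMascheroniConstant * (1 - Real.sqrt (1 - 4*α)))
            * Real.Gamma ((3 - Real.sqrt (1 - 4*α)) / 2)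
          / ((1 - 4*α) ^ ((1:ℝ)/4) * Real.Gamma ((3 + Real.sqrt (1 - 4*α)) / 2)) := by
  intro α hα₁ hα₂
  have hsub : uIcc 0 α ⊆ Ioo (-2) (1/4) :=
    ordConnected_Ioo.uIcc_subset (by norm_num) ⟨hα₁, hα₂⟩
  have hg_div : ∀ u ∈ Ioo (-2 : ℝ) (1/4), u ≠ 0 → g u / u = -rainbowLogDeriv u := by
    intro u hu hu0
    have hs0 := (sqrt_one_sub_four_mul_mem_Ioo hu).1
    have hpos : 0 < 1 - 4*u := by linarith [hu.2]
    rw [hg u, rainbowLogDeriv]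
    field_simp
    ring
  have hFTC : ∫ u in (0:ℝ)..α, g u / u = -(rainbowLog α - rainbowLog 0) := by
    rw [← integral_eq_sub_of_hasDerivAt (fun u hu => hasDerivAt_rainbowLog (hsub hu))
      ((continuousOn_rainbowLogDeriv.mono hsub).intervalIntegrable), ← integral_neg]
    -- `g u / u` takes the junk value `0` at `u = 0`, so the integrands agree only a.e.
    refine integral_congr_ae ?_
    filter_upwards [(countable_singleton (0 : ℝ)).ae_notMem MeasureTheory.volume] with u hu0 hu
    exact hg_div u (hsub (uIoc_subset_uIcc hu)) hu0
  rw [hFTC, rainbowLog_zero, sub_zero, neg_neg, exp_rainbowLog ⟨hα₁, hα₂⟩]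
end

section
/- Let \gamma: I \to \mathbb{R} be continuous on an interval containing 0 with \gamma(u)/u bounded near 0, and \epsilon \neq 0. Then G(\alpha, L) := \exp\left(\int_{\alpha e^{-\epsilon L}}^{\alpha} \frac{\gamma(u)}{u\epsilon} du\right) satisfies the Callan–Symanzik equation \partial_L G(\alpha, L) = (\gamma(\alpha) - \epsilon\alpha\partial_\alpha)G(\alpha, L) with G(\alpha, 0) = 1. Moreover, if \gamma is continuous at every point, \lim_{\epsilon \to 0} G(\alpha, L) = e^{L\gamma(\alpha)} for fixed \alpha, L. -/
open Filter MeasureTheory Topology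

/-!
Fix a primitive `Φ` of `γ(u)/u` on `(0, ∞)`. Then the exponent of `G` is
`(Φ(α) - Φ(α e^{-εL})) / ε`. Differentiating gives `∂_L G = γ(α e^{-εL}) G` and
`ε α ∂_α G = (γ(α) - γ(α e^{-εL})) G`, whose difference is the Callan–Symanzik equation.
As `ε → 0` the exponent is minus the difference quotient at `0` of `ε ↦ Φ(α e^{-εL})`,
which tends to `-Φ'(α) · (-αL) = L γ(α)`.
-/

noncomputable section

def logPrimitive (γ : ℝ → ℝ) (y : ℝ) : ℝ :=
  ∫ u in (1 : ℝ)..y, γ u / u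

def callanSymanzikSolution (Φ : ℝ → ℝ) (ε a L : ℝ) : ℝ :=
  Real.exp ((Φ a - Φ (a * Real.exp (-ε * L))) / ε)

end

section LogPrimitive

variable {γ : ℝ → ℝ} (hγ : ContinuousOn γ (Set.Ioi 0))
include hγ

lemma continuousOn_div_self : ContinuousOn (fun u => γ u / u) (Set.Ioi 0) :=
  hγ.div continuousOn_id fun _ hx => ne_of_gt hx

lemma intervalIntegrable_div_self {a b : ℝ} (ha : 0 < a) (hb : 0 < b) :
    IntervalIntegrable (fun u => γ u / u) volume a b :=
  ((continuousOn_div_self hγ).mono fun _ hx =>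
    lt_of_lt_of_le (lt_min ha hb) hx.1).intervalIntegrable

lemma hasDerivAt_logPrimitive {x : ℝ} (hx : 0 < x) :
    HasDerivAt (logPrimitive γ) (γ x / x) x :=
  intervalIntegral.integral_hasDerivAt_right (intervalIntegrable_div_self hγ one_pos hx)
    ((continuousOn_div_self hγ).stronglyMeasurableAtFilter isOpen_Ioi x hx)
    ((continuousOn_div_self hγ).continuousAt (Ioi_mem_nhds hx))

lemma integral_div_mul_eq_logPrimitive {a b : ℝ} (ha : 0 < a) (hb : 0 < b) (ε : ℝ) :
    ∫ u in b..a, γ u / (u * ε) = (logPrimitive γ a - logPrimitive γ b) / ε := by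
  rw [logPrimitive, logPrimitive, intervalIntegral.integral_interval_sub_left
    (intervalIntegrable_div_self hγ one_pos ha) (intervalIntegrable_div_self hγ one_pos hb),
    ← intervalIntegral.integral_div]
  simp only [div_div]

end LogPrimitive

section CallanSymanzikSolution

variable {γ Φ : ℝ → ℝ} (hΦ : ∀ x, 0 < x → HasDerivAt Φ (γ x / x) x)
include hΦ

lemma hasDerivAt_callanSymanzikSolution_logScale {ε a : ℝ} (hε : ε ≠ 0) (ha : 0 < a)
    (L : ℝ) :
    HasDerivAt (callanSymanzikSolution Φ ε a)
      (γ (a * Real.exp (-ε * L)) * callanSymanzikSolution Φ ε a L) L := by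
  have hx : 0 < a * Real.exp (-ε * L) := mul_pos ha (Real.exp_pos _)
  have hscale : HasDerivAt (fun L' => a * Real.exp (-ε * L'))
      (a * (Real.exp (-ε * L) * (-ε * 1))) L :=
    (((hasDerivAt_id L).const_mul (-ε)).exp).const_mul a
  have hexp := (((hΦ _ hx).comp L hscale).const_sub (Φ a) |>.div_const ε).exp
  refine HasDerivAt.congr_deriv (f := callanSymanzikSolution Φ ε a) hexp ?_
  simp only [callanSymanzikSolution, Function.comp_apply]
  field_simp

lemma hasDerivAt_callanSymanzikSolution_coupling {ε a : ℝ} (hε : ε ≠ 0) (ha : 0 < a)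
    (L : ℝ) :
    HasDerivAt (fun a' => callanSymanzikSolution Φ ε a' L)
      ((γ a - γ (a * Real.exp (-ε * L))) / (ε * a) * callanSymanzikSolution Φ ε a L) a := by
  have hx : 0 < a * Real.exp (-ε * L) := mul_pos ha (Real.exp_pos _)
  have hscale : HasDerivAt (fun a' => a' * Real.exp (-ε * L)) (1 * Real.exp (-ε * L)) a :=
    (hasDerivAt_id a).mul_const _
  have hexp := (((hΦ a ha).sub ((hΦ _ hx).comp a hscale)).div_const ε).exp
  refine HasDerivAt.congr_deriv (f := fun a' => callanSymanzikSolution Φ ε a' L) hexp ?_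
  simp only [callanSymanzikSolution, Pi.sub_apply, Function.comp_apply]
  field_simp

lemma tendsto_callanSymanzikSolution_exponent {α : ℝ} (hα : 0 < α) (L : ℝ) :
    Tendsto (fun ε => (Φ α - Φ (α * Real.exp (-ε * L))) / ε) (𝓝[≠] 0)
      (𝓝 (L * γ α)) := by
  have hscale : HasDerivAt (fun ε => α * Real.exp (-ε * L)) (α * (1 * (-1 * L))) 0 := by
    simpa using (((hasDerivAt_id (0 : ℝ)).neg.mul_const L).exp).const_mul α
  have hcomp : HasDerivAt (fun ε => Φ (α * Real.exp (-ε * L))) (-(L * γ α)) 0 := by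
    refine ((hΦ α hα).comp_of_eq 0 hscale (by simp)).congr_deriv ?_
    field_simp
  have hslope := (hasDerivAt_iff_tendsto_slope.mp hcomp).neg
  rw [neg_neg] at hslope
  refine hslope.congr' (eventually_nhdsWithin_of_forall fun ε _ => ?_)
  simp only [neg_mul, slope_def_field, zero_mul, neg_zero, Real.exp_zero, mul_one, sub_zero]
  ring

lemma tendsto_callanSymanzikSolution {α : ℝ} (hα : 0 < α) (L : ℝ) :
    Tendsto (fun ε => callanSymanzikSolution Φ ε α L) (𝓝[≠] 0)
      (𝓝 (Real.exp (L * γ α))) :=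
  (Real.continuous_exp.tendsto _).comp (tendsto_callanSymanzikSolution_exponent hΦ hα L)

end CallanSymanzikSolution

theorem callan_symanzik_solution_general (γ : ℝ → ℝ) (hγ : Continuous γ)
    (G : ℝ → ℝ → ℝ → ℝ)
    (hG : G = fun ε α L =>
      Real.exp (∫ u in (α * Real.exp (-ε * L))..α, γ u / (u * ε))) :
    (∀ ε : ℝ, ε ≠ 0 → ∀ α : ℝ, 0 < α → ∀ L : ℝ,
        HasDerivAt (fun L' => G ε α L')
          (γ α * G ε α L - ε * α * deriv (fun a => G ε a L) α) L ∧
        G ε α 0 = 1) ∧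
      (∀ α L : ℝ, 0 < α →
        Tendsto (fun ε => G ε α L) (nhdsWithin 0 {(0:ℝ)}ᶜ)
          (nhds (Real.exp (L * γ α)))) := by
  have hΦ : ∀ x, 0 < x → HasDerivAt (logPrimitive γ) (γ x / x) x :=
    fun _ => hasDerivAt_logPrimitive hγ.continuousOn
  have hGΦ : ∀ ε a L, 0 < a → G ε a L = callanSymanzikSolution (logPrimitive γ) ε a L :=
    fun ε a L ha => by
      simp only [hG, callanSymanzikSolution,
        integral_div_mul_eq_logPrimitive hγ.continuousOn ha (mul_pos ha (Real.exp_pos _))]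
  refine ⟨fun ε hε α hα L => ⟨?_, by simp [hG]⟩, fun α L hα => ?_⟩
  · have hda : deriv (fun a => G ε a L) α = _ :=
      ((hasDerivAt_callanSymanzikSolution_coupling hΦ hε hα L).congr_of_eventuallyEq
        (eventually_gt_nhds hα |>.mono fun a ha => hGΦ ε a L ha)).deriv
    rw [hda, hGΦ ε α L hα]
    refine ((hasDerivAt_callanSymanzikSolution_logScale hΦ hε hα L).congr_of_eventuallyEq
      (Eventually.of_forall fun L' => hGΦ ε α L' hα)).congr_deriv ?_
    field_simp
    ring
  · exact (tendsto_callanSymanzikSolution hΦ hα L).congr fun ε => (hGΦ ε α L hα).symm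

/-- `G(α,L) = exp(∫_{α e^{-εL}}^α γ(u)/(uε) du)` solves the
Callan–Symanzik equation `∂_L G = (γ(α) - ε α ∂_α) G` with `G(α,0) = 1`, and
`G → e^{L γ(α)}` as `ε → 0`. -/
theorem callan_symanzik_solution (γ : ℝ → ℝ) (hγ : Continuous γ)
    (C d : ℝ) (hd : 0 < d) (hbd : ∀ u : ℝ, |u| < d → |γ u| ≤ C * |u|)
    (G : ℝ → ℝ → ℝ → ℝ)
    (hG : G = fun ε α L =>
      Real.exp (∫ u in (α * Real.exp (-ε * L))..α, γ u / (u * ε))) :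
    (∀ ε : ℝ, ε ≠ 0 → ∀ α : ℝ, 0 < α → ∀ L : ℝ,
        HasDerivAt (fun L' => G ε α L')
          (γ α * G ε α L - ε * α * deriv (fun a => G ε a L) α) L ∧
        G ε α 0 = 1) ∧
      (∀ α L : ℝ, 0 < α →
        Tendsto (fun ε => G ε α L) (nhdsWithin 0 {(0:ℝ)}ᶜ)
          (nhds (Real.exp (L * γ α)))) :=
  callan_symanzik_solution_general γ hγ G hG
end
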